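/- arXiv:2512.08278 — 5 statements merged into one kernel-verified Lean document; each statement's English description precedes it below -/
import Mathlib

section
/- Let p be an odd prime, f(T) ∈ ℤ_p[[T]] a power series, and α ∈ ℤ_p. Then at least one of the following holds: dim_{𝔽_p} ℤ_p[[S,T]]/I_α(f) ≤ 1, or dim_{𝔽_p} ℤ_p[[S,T]]/I_{−α}(f) ≤ 1. (Lemma 'powerseries dimension', the key lemma of the paper.) -/
open PowerSeries

/-- The two-variable power series ring `ℤ_p[[S,T]]`, realized as `(ℤ_p[[T]])[[S]]`:
the outer variable `PowerSeries.X` is `S`, the inner `ℤ_p[[T]] = PowerSeries ℤ_[p]` is the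
subring of series not involving `S` (included via `PowerSeries.C`), and `T` is
`C (PowerSeries.X)`. -/
abbrev Lambda (p : ℕ) [Fact p.Prime] : Type := PowerSeries (PowerSeries ℤ_[p])

/-- `(1+S)^α := Σ_{i≥0} C(α,i) S^i ∈ ℤ_p[[S,T]]`, where `C(α,i) = Ring.choose α i ∈ ℤ_p` is the
`p`-adic binomial coefficient `α(α−1)⋯(α−i+1)/i!`. -/
noncomputable def onePlusSPow (p : ℕ) [Fact p.Prime] (α : ℤ_[p]) : Lambda p :=
  PowerSeries.mk fun i => PowerSeries.C (R := ℤ_[p]) (Ring.choose α i)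

/-- The variable `T` of `ℤ_p[[S,T]]`. -/
noncomputable def Tvar (p : ℕ) [Fact p.Prime] : Lambda p :=
  PowerSeries.C (R := PowerSeries ℤ_[p]) PowerSeries.X

/-- The ideal `I_α(f) = ((1+S)^α(1+T) − 1, S − f(T), p)` of `ℤ_p[[S,T]]`. -/
noncomputable def Ialpha (p : ℕ) [Fact p.Prime] (f : PowerSeries ℤ_[p]) (α : ℤ_[p]) :
    Ideal (Lambda p) :=
  Ideal.span {onePlusSPow p α * (1 + Tvar p) - 1,
    PowerSeries.X - PowerSeries.C (R := PowerSeries ℤ_[p]) f, (p : Lambda p)}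

lemma p_mem_Ialpha (p : ℕ) [Fact p.Prime] (f : PowerSeries ℤ_[p]) (α : ℤ_[p]) :
    (p : Lambda p) ∈ Ialpha p f α :=
  Ideal.subset_span (by simp)

/-- The dimension of `R/I` as an `𝔽_p = ZMod p` vector space, for an ideal `I` of `R`
containing `p` (so that the quotient ring is naturally an `𝔽_p`-vector space). -/
noncomputable def fpDim (p : ℕ) {R : Type} [CommRing R] (I : Ideal R)
    (h : (p : R) ∈ I) : Cardinal :=
  letI : Module (ZMod p) (R ⧸ I) := AddCommGroup.zmodModule (fun x => by
    obtain ⟨y, rfl⟩ := Ideal.Quotient.mk_surjective x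
    rw [← map_nsmul, nsmul_eq_mul]
    exact Ideal.Quotient.eq_zero_iff_mem.mpr (I.mul_mem_right y h))
  Module.rank (ZMod p) (R ⧸ I)

/-!
If `f(0)` is a unit then so is `S - f(T)`, and `I_α(f)` is the whole ring. Otherwise `I_α(f)`
lies in the maximal ideal `𝔪 = (p, S, T)` of the local ring `ℤ_p[[S,T]]`, and modulo `𝔪²` its
generators reduce to `T + αS`, `S - f'(0)T` and `p`. These span `𝔪/𝔪²` as soon as
`1 + αf'(0)` is a unit, and then Nakayama's lemma gives `I_α(f) = 𝔪`, of codimension one.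
For odd `p` the sum `(1 + αf'(0)) + (1 - αf'(0)) = 2` is a unit, so this happens for `α` or `-α`.
-/

lemma PowerSeries.X_sq_dvd_sub_C_sub_C_mul_X {R : Type*} [CommRing R] (φ : R⟦X⟧) :
    X ^ 2 ∣ φ - C (coeff 0 φ) - C (coeff 1 φ) * X := by
  refine X_pow_dvd_iff.mpr fun m hm => ?_
  interval_cases m <;> simp [coeff_C]

section

variable (p : ℕ) [Fact p.Prime]

lemma rank_quotient_le_one_of_forall_exists_sub_natCast_mem {R : Type} [CommRing R]
    {I : Ideal R} [Module (ZMod p) (R ⧸ I)] (h : ∀ F : R, ∃ n : ℕ, F - n ∈ I) :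
    Module.rank (ZMod p) (R ⧸ I) ≤ 1 := by
  rw [rank_le_one_iff]
  refine ⟨Ideal.Quotient.mk I 1, fun w => ?_⟩
  obtain ⟨F, rfl⟩ := Ideal.Quotient.mk_surjective w
  obtain ⟨n, hn⟩ := h F
  refine ⟨(n : ZMod p), ?_⟩
  rw [Nat.cast_smul_eq_nsmul, ← map_nsmul, nsmul_eq_mul, mul_one,
    Ideal.Quotient.mk_eq_mk_iff_sub_mem, ← neg_sub]
  exact I.neg_mem hn

lemma PadicInt.isUnit_two_of_odd (hp : Odd p) : IsUnit (2 : ℤ_[p]) := by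
  by_contra h
  have hdvd : ((p : ℤ) ∣ 2) := by
    simpa using (PadicInt.norm_int_lt_one_iff_dvd (p := p) 2).mp (PadicInt.not_isUnit_iff.mp h)
  have h2 : p = 2 :=
    (Nat.prime_dvd_prime_iff_eq Fact.out Nat.prime_two).mp (by exact_mod_cast hdvd)
  exact absurd (h2 ▸ hp) (by decide)

noncomputable def maxIdeal : Ideal (Lambda p) := Ideal.span {(p : Lambda p), X, Tvar p}

lemma natCast_mem_maxIdeal : (p : Lambda p) ∈ maxIdeal p := Ideal.subset_span (by simp)

lemma X_mem_maxIdeal : (X : Lambda p) ∈ maxIdeal p := Ideal.subset_span (by simp)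

lemma Tvar_mem_maxIdeal : Tvar p ∈ maxIdeal p := Ideal.subset_span (by simp)

lemma maxIdeal_le_maximalIdeal : maxIdeal p ≤ IsLocalRing.maximalIdeal (Lambda p) := by
  simp only [maxIdeal, Ideal.span_le, Set.insert_subset_iff, Set.singleton_subset_iff,
    SetLike.mem_coe, IsLocalRing.mem_maximalIdeal, mem_nonunits_iff, isUnit_iff_constantCoeff,
    Tvar, constantCoeff_X, constantCoeff_C, map_natCast, not_isUnit_zero]
  exact ⟨PadicInt.p_nonunit, not_false, not_false⟩

lemma exists_sub_natCast_mem_maxIdeal (F : Lambda p) : ∃ n : ℕ, F - n ∈ maxIdeal p := by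
  set a := constantCoeff (constantCoeff F)
  have hm := PadicInt.sub_zmodRepr_mem a
  rw [PadicInt.maximalIdeal_eq_span_p, Ideal.mem_span_singleton'] at hm
  obtain ⟨z, hz⟩ := hm
  refine ⟨PadicInt.zmodRepr a, ?_⟩
  have hF := eq_X_mul_shift_add_const F
  have hG := congrArg C (eq_X_mul_shift_add_const (constantCoeff F))
  have ha := congrArg (fun x : ℤ_[p] => (C (C x) : Lambda p)) hz
  simp only [map_mul, map_sub, map_natCast, map_add] at hG ha
  have key : F - (PadicInt.zmodRepr a : Lambda p) = X * (mk fun n => coeff (n + 1) F)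
      + Tvar p * C (mk fun n => coeff (n + 1) (constantCoeff F)) + (p : Lambda p) * C (C z) := by
    rw [Tvar]; linear_combination hF + hG - ha
  rw [key]
  exact add_mem (add_mem (Ideal.mul_mem_right _ _ (X_mem_maxIdeal p))
    (Ideal.mul_mem_right _ _ (Tvar_mem_maxIdeal p)))
    (Ideal.mul_mem_right _ _ (natCast_mem_maxIdeal p))

lemma maxIdeal_le_jacobson : maxIdeal p ≤ (⊥ : Ideal (Lambda p)).jacobson :=
  (maxIdeal_le_maximalIdeal p).trans (IsLocalRing.maximalIdeal_le_jacobson ⊥)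

lemma mul_mem_maxIdeal_sq {x y : Lambda p} (hx : x ∈ maxIdeal p) (hy : y ∈ maxIdeal p) :
    x * y ∈ maxIdeal p ^ 2 :=
  pow_two (maxIdeal p) ▸ Ideal.mul_mem_mul hx hy

variable {p}

lemma onePlusSPow_mul_sub_one_mem_Ialpha (f : PowerSeries ℤ_[p]) (α : ℤ_[p]) :
    onePlusSPow p α * (1 + Tvar p) - 1 ∈ Ialpha p f α :=
  Ideal.subset_span (Set.mem_insert _ _)

lemma X_sub_C_mem_Ialpha (f : PowerSeries ℤ_[p]) (α : ℤ_[p]) :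
    X - C f ∈ Ialpha p f α :=
  Ideal.subset_span (Set.mem_insert_of_mem _ (Set.mem_insert _ _))

lemma Ialpha_eq_top_of_isUnit {f : PowerSeries ℤ_[p]} (hf : IsUnit (constantCoeff f))
    (α : ℤ_[p]) : Ialpha p f α = ⊤ := by
  refine Ideal.eq_top_of_isUnit_mem _ (X_sub_C_mem_Ialpha f α) ?_
  rwa [isUnit_iff_constantCoeff, map_sub, constantCoeff_X, constantCoeff_C, zero_sub,
    IsUnit.neg_iff, isUnit_iff_constantCoeff]

lemma Tvar_add_C_mul_X_mem_Ialpha_sup (f : PowerSeries ℤ_[p]) (α : ℤ_[p]) :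
    Tvar p + C (C α) * X ∈ Ialpha p f α ⊔ maxIdeal p ^ 2 := by
  obtain ⟨R, hR⟩ := X_sq_dvd_sub_C_sub_C_mul_X (onePlusSPow p α)
  simp only [onePlusSPow, coeff_mk, Ring.choose_zero_right, Ring.choose_one_right, map_one]
    at hR
  have key : Tvar p + C (C α) * X = (onePlusSPow p α * (1 + Tvar p) - 1)
      - X * Tvar p * C (C α) - X * X * (R * (1 + Tvar p)) := by
    rw [onePlusSPow]; linear_combination (-1 - Tvar p) * hR
  rw [key]
  exact sub_mem (sub_mem (Ideal.mem_sup_left (onePlusSPow_mul_sub_one_mem_Ialpha f α))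
    (Ideal.mem_sup_right (Ideal.mul_mem_right _ _
      (mul_mem_maxIdeal_sq p (X_mem_maxIdeal p) (Tvar_mem_maxIdeal p)))))
    (Ideal.mem_sup_right (Ideal.mul_mem_right _ _
      (mul_mem_maxIdeal_sq p (X_mem_maxIdeal p) (X_mem_maxIdeal p))))

lemma X_sub_C_mul_Tvar_mem_Ialpha_sup {f : PowerSeries ℤ_[p]} (hf : ¬IsUnit (constantCoeff f))
    (α : ℤ_[p]) : X - C (C (coeff 1 f)) * Tvar p ∈ Ialpha p f α ⊔ maxIdeal p ^ 2 := by
  obtain ⟨g, hg⟩ := X_sq_dvd_sub_C_sub_C_mul_X f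
  obtain ⟨z, hz⟩ := (PadicInt.norm_lt_one_iff_dvd _).mp (PadicInt.not_isUnit_iff.mp hf)
  rw [coeff_zero_eq_constantCoeff_apply, hz] at hg
  have key : X - C (C (coeff 1 f)) * Tvar p
      = (X - C f) + (p : Lambda p) * C (C z) + Tvar p * Tvar p * C g := by
    have hg' := congrArg (C : PowerSeries ℤ_[p] → Lambda p) hg
    simp only [map_sub, map_mul, map_pow, map_natCast] at hg'
    rw [Tvar]; linear_combination hg'
  rw [key]
  exact add_mem (add_mem (Ideal.mem_sup_left (X_sub_C_mem_Ialpha f α))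
    (Ideal.mem_sup_left (Ideal.mul_mem_right _ _ (p_mem_Ialpha p f α))))
    (Ideal.mem_sup_right (Ideal.mul_mem_right _ _
      (mul_mem_maxIdeal_sq p (Tvar_mem_maxIdeal p) (Tvar_mem_maxIdeal p))))

lemma maxIdeal_le_Ialpha {f : PowerSeries ℤ_[p]} (hf : ¬IsUnit (constantCoeff f)) {α : ℤ_[p]}
    (hα : IsUnit (1 + α * coeff 1 f)) : maxIdeal p ≤ Ialpha p f α := by
  refine Submodule.le_of_le_smul_of_le_jacobson_bot (Submodule.fg_span (Set.toFinite _))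
    (maxIdeal_le_jacobson p) ?_
  rw [Ideal.smul_eq_mul, ← pow_two]
  have hTX := Tvar_add_C_mul_X_mem_Ialpha_sup f α
  have hXT := X_sub_C_mul_Tvar_mem_Ialpha_sup hf α
  have hT : Tvar p ∈ Ialpha p f α ⊔ maxIdeal p ^ 2 := by
    obtain ⟨u, hu⟩ := hα
    have hinv := congrArg (fun x : ℤ_[p] => (C (C x) : Lambda p)) (u.inv_mul)
    simp only [hu, map_mul, map_add, map_one] at hinv
    have key : Tvar p = C (C (↑u⁻¹ : ℤ_[p])) * ((Tvar p + C (C α) * X)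
        - C (C α) * (X - C (C (coeff 1 f)) * Tvar p)) := by
      linear_combination (-Tvar p) * hinv
    rw [key]
    exact Ideal.mul_mem_left _ _ (sub_mem hTX (Ideal.mul_mem_left _ _ hXT))
  have hX : X ∈ Ialpha p f α ⊔ maxIdeal p ^ 2 := by
    simpa using add_mem hXT (Ideal.mul_mem_left _ (C (C (coeff 1 f))) hT)
  simp only [maxIdeal, Ideal.span_le, Set.insert_subset_iff, Set.singleton_subset_iff,
    SetLike.mem_coe]
  exact ⟨Ideal.mem_sup_left (p_mem_Ialpha p f α), hX, hT⟩

lemma fpDim_le_one_of_maxIdeal_le {I : Ideal (Lambda p)} (hpI : (p : Lambda p) ∈ I)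
    (hI : maxIdeal p ≤ I) : fpDim p I hpI ≤ 1 := by
  unfold fpDim
  -- the module structure is the one built inside `fpDim`; it is found by unification
  exact @rank_quotient_le_one_of_forall_exists_sub_natCast_mem p _ _ _ I ?_
    fun F => (exists_sub_natCast_mem_maxIdeal p F).imp fun _ hn => hI hn

end

/-- Lemma `powerseries dimension`: for an odd prime `p`, a power series
`f(T) ∈ ℤ_p[[T]]` and `α ∈ ℤ_p`, one has `dim_{𝔽_p} ℤ_p[[S,T]]/I_α(f) ≤ 1` or
`dim_{𝔽_p} ℤ_p[[S,T]]/I_{−α}(f) ≤ 1`. -/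
theorem powerseries_dimension (p : ℕ) [Fact p.Prime] (hp : Odd p)
    (f : PowerSeries ℤ_[p]) (α : ℤ_[p]) :
    fpDim p (Ialpha p f α) (p_mem_Ialpha p f α) ≤ 1 ∨
    fpDim p (Ialpha p f (-α)) (p_mem_Ialpha p f (-α)) ≤ 1 := by
  by_cases hf : IsUnit (constantCoeff f)
  · left
    exact fpDim_le_one_of_maxIdeal_le _ (by simp [Ialpha_eq_top_of_isUnit hf])
  have h2 : IsUnit ((1 + α * coeff 1 f) + (1 + -α * coeff 1 f)) := by
    convert PadicInt.isUnit_two_of_odd p hp using 1; ring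
  rcases IsLocalRing.isUnit_or_isUnit_of_isUnit_add h2 with hα | hα
  · exact .inl (fpDim_le_one_of_maxIdeal_le _ (maxIdeal_le_Ialpha hf hα))
  · exact .inr (fpDim_le_one_of_maxIdeal_le _ (maxIdeal_le_Ialpha hf hα))
end

section
/- Let p be a prime, f(T) ∈ ℤ_p[[T]] a power series whose constant coefficient lies in pℤ_p, and α ∈ ℤ_p. Let f̄ ∈ 𝔽_p[[T]] denote the coefficientwise reduction of f modulo p (so f̄ has zero constant coefficient). Then the ring homomorphism ℤ_p[[S,T]] → 𝔽_p[[T]] obtained by reducing coefficients modulo p and substituting S ↦ f̄(T), T ↦ T induces an isomorphism of rings ℤ_p[[S,T]]/I_α(f) ≅ 𝔽_p[[T]]/((1+f̄)^α(1+T) − 1). (Reduction step in the proof of the key lemma.) -/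
open PowerSeries

/-- For `g ∈ 𝔽_p[[T]]` (intended to have zero constant coefficient),
`(1+g)^α := Σ_{i≥0} c(α,i)·g^i ∈ 𝔽_p[[T]]`, where `c(α,i) ∈ 𝔽_p` is the mod-`p` reduction of the
`p`-adic binomial coefficient `C(α,i) = Ring.choose α i ∈ ℤ_p`.  Since `g^i` has order `≥ i`
when `g` has zero constant coefficient, the `n`-th coefficient of the sum is the finite sum
over `i ≤ n`. -/
noncomputable def onePlusPow (p : ℕ) [Fact p.Prime] (g : PowerSeries (ZMod p)) (α : ℤ_[p]) :
    PowerSeries (ZMod p) :=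
  PowerSeries.mk fun n => ∑ i ∈ Finset.range (n + 1),
    PadicInt.toZMod (Ring.choose α i) * PowerSeries.coeff (R := ZMod p) n (g ^ i)

/-!
Reducing coefficients mod `p` maps `ℤ_p[[T]][[S]]` onto `𝔽_p[[T]][[S]]` with kernel `(p)`, since
`ker (ℤ_p → 𝔽_p) = (p)`. As `f̄` has no constant term it is topologically nilpotent in the `T`-adic
topology, so evaluation at `S = f̄` is a surjection `𝔽_p[[T]][[S]] → 𝔽_p[[T]]`, and the division
`F = (S - f̄) Q + F(f̄)` shows that its kernel is `(S - f̄)`. The composite is therefore onto with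
kernel `(S - f, p)`, and dividing further by the image of `(1+S)^α(1+T) - 1` gives `I_α(f)`.
-/

namespace PowerSeries

open WithPiTopology

section Evaluation

variable {R S : Type*} [CommRing R] [CommRing S] [UniformSpace R] [IsUniformAddGroup R]
  [IsTopologicalRing R] [UniformSpace S] [IsUniformAddGroup S] [IsTopologicalRing S] [T2Space S]
  [CompleteSpace S] [IsLinearTopology S S] {φ : R →+* S} {a : S}

theorem eval₂Hom_C (hφ : Continuous φ) (ha : HasEval a) (r : R) :
    eval₂Hom hφ ha (C r) = φ r := by
  rw [coe_eval₂Hom, eval₂_C]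

theorem eval₂Hom_X (hφ : Continuous φ) (ha : HasEval a) : eval₂Hom hφ ha X = a := by
  rw [coe_eval₂Hom, eval₂_X]

theorem hasSum_eval₂Hom (hφ : Continuous φ) (ha : HasEval a) (F : R⟦X⟧) :
    HasSum (fun i => φ (coeff i F) * a ^ i) (eval₂Hom hφ ha F) :=
  coe_eval₂Hom hφ ha ▸ hasSum_eval₂ hφ ha F

end Evaluation

section Division

variable {A : Type*} [CommRing A] [UniformSpace A] [IsUniformAddGroup A] [IsTopologicalRing A]
  [T2Space A] [CompleteSpace A] [IsLinearTopology A A] {a : A} (ha : HasEval a)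

theorem eval₂Hom_id_shift (F : A⟦X⟧) (j : ℕ) :
    eval₂Hom (φ := RingHom.id A) continuous_id ha (mk fun i => coeff (i + j) F) =
      coeff j F +
        a * eval₂Hom (φ := RingHom.id A) continuous_id ha (mk fun i => coeff (i + (j + 1)) F) := by
  have hshift := sub_const_eq_X_mul_shift (mk fun i => coeff (i + j) F)
  simp only [coeff_mk, ← coeff_zero_eq_constantCoeff_apply, zero_add, add_assoc,
    add_comm 1 j] at hshift
  rw [sub_eq_iff_eq_add'.mp hshift, map_add, map_mul, eval₂Hom_C, eval₂Hom_X, RingHom.id_apply]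

theorem eq_X_sub_C_mul_add_C_eval₂Hom_id (F : A⟦X⟧) :
    F = (X - C a) * (mk fun j =>
        eval₂Hom (φ := RingHom.id A) continuous_id ha (mk fun i => coeff (i + (j + 1)) F)) +
      C (eval₂Hom (φ := RingHom.id A) continuous_id ha F) := by
  ext (_ | j)
  · have hF : (mk fun i => coeff (i + 0) F) = F := by ext; simp
    have := eval₂Hom_id_shift ha F 0
    rw [hF] at this
    simp only [map_add, sub_mul, map_sub, coeff_zero_X_mul, coeff_C_mul, coeff_mk, coeff_zero_C,
      this]
    ring
  · simp only [map_add, sub_mul, map_sub, coeff_succ_X_mul, coeff_C_mul, coeff_mk, coeff_C,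
      if_neg j.succ_ne_zero, eval₂Hom_id_shift ha F (j + 1)]
    ring

theorem ker_eval₂Hom_id :
    RingHom.ker (eval₂Hom (φ := RingHom.id A) continuous_id ha) = Ideal.span {X - C a} := by
  refine le_antisymm (fun F hF => ?_) ?_
  · rw [eq_X_sub_C_mul_add_C_eval₂Hom_id ha F, RingHom.mem_ker.mp hF, map_zero, add_zero]
    exact Ideal.mul_mem_right _ _ (Ideal.mem_span_singleton_self _)
  · rw [Ideal.span_le, Set.singleton_subset_iff, SetLike.mem_coe, RingHom.mem_ker, map_sub,
      eval₂Hom_X, eval₂Hom_C, RingHom.id_apply, sub_self]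

end Division

section EvalAt

variable {k : Type*} [CommRing k]

/-- With `k` discrete, the product topology on `k⟦X⟧` is the `X`-adic one, in which `g` is
topologically nilpotent. -/
noncomputable def evalAt (g : k⟦X⟧) (hg : constantCoeff g = 0) : k⟦X⟧⟦X⟧ →+* k⟦X⟧ :=
  letI : UniformSpace k := ⊥
  haveI : DiscreteTopology k := ⟨rfl⟩
  eval₂Hom (φ := RingHom.id _) continuous_id (isTopologicallyNilpotent_of_constantCoeff_zero hg)

variable {g : k⟦X⟧} (hg : constantCoeff g = 0)

include hg in
theorem coeff_mul_pow_of_lt (c : k⟦X⟧) {n i : ℕ} (h : n < i) : coeff n (c * g ^ i) = 0 := by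
  obtain ⟨u, rfl⟩ := X_dvd_iff.mpr hg
  rw [mul_pow, mul_left_comm, coeff_X_pow_mul', if_neg (not_le.mpr h)]

theorem coeff_evalAt (F : k⟦X⟧⟦X⟧) (n : ℕ) :
    coeff n (evalAt g hg F) = ∑ i ∈ Finset.range (n + 1), coeff n (coeff i F * g ^ i) := by
  let _ : UniformSpace k := ⊥
  have _ : DiscreteTopology k := ⟨rfl⟩
  have hsum := (hasSum_iff_hasSum_coeff k).mp
    (hasSum_eval₂Hom (φ := RingHom.id _) continuous_id
      (isTopologicallyNilpotent_of_constantCoeff_zero hg) F) n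
  exact hsum.unique (hasSum_sum_of_ne_finset_zero (s := Finset.range (n + 1)) fun i hi =>
    coeff_mul_pow_of_lt hg _ (by simpa using hi))

theorem evalAt_C (c : k⟦X⟧) : evalAt g hg (C c) = c :=
  letI : UniformSpace k := ⊥
  eval₂Hom_C _ _ c

theorem evalAt_surjective : Function.Surjective (evalAt g hg) :=
  fun c => ⟨C c, evalAt_C hg c⟩

theorem ker_evalAt : RingHom.ker (evalAt g hg) = Ideal.span {X - C g} :=
  letI : UniformSpace k := ⊥
  haveI : DiscreteTopology k := ⟨rfl⟩
  ker_eval₂Hom_id _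

end EvalAt

theorem ker_map_of_ker_eq_span_singleton {R S : Type*} [CommRing R] [CommRing S] {φ : R →+* S}
    {r : R} (h : RingHom.ker φ = Ideal.span {r}) :
    RingHom.ker (map φ) = Ideal.span {C r} := by
  ext F
  have hcoeff : F ∈ RingHom.ker (map φ) ↔ ∀ n, r ∣ coeff n F := by
    simp only [RingHom.mem_ker, PowerSeries.ext_iff, coeff_map, map_zero,
      ← Ideal.mem_span_singleton, ← h]
  rw [hcoeff, Ideal.mem_span_singleton]
  constructor
  · intro hF
    choose c hc using hF
    exact ⟨mk c, by ext n; rw [coeff_C_mul, coeff_mk, hc]⟩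
  · rintro ⟨c, rfl⟩ n
    exact ⟨coeff n c, by rw [coeff_C_mul]⟩

end PowerSeries

theorem RingHom.exists_quotientEquiv_span_singleton {R S : Type*} [CommRing R] [CommRing S]
    {Φ : R →+* S} (hΦ : Function.Surjective Φ) {w : R} {s : S} (hs : Φ w = s) {I : Ideal R}
    (hI : I = Ideal.span {w} ⊔ RingHom.ker Φ) :
    ∃ e : (R ⧸ I) ≃+* (S ⧸ Ideal.span {s}),
      ∀ F, e (Ideal.Quotient.mk I F) = Ideal.Quotient.mk _ (Φ F) := by
  have hker : RingHom.ker ((Ideal.Quotient.mk (Ideal.span {s})).comp Φ) = I := by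
    rw [← RingHom.comap_ker, Ideal.mk_ker, ← hs, ← Set.image_singleton, ← Ideal.map_span,
      Ideal.comap_map_of_surjective _ hΦ, ← RingHom.ker_eq_comap_bot, hI]
  exact ⟨(Ideal.quotEquivOfEq hker.symm).trans (RingHom.quotientKerEquivOfSurjective
    (Ideal.Quotient.mk_surjective.comp hΦ)), fun F => rfl⟩

section Reduction

variable {p : ℕ} [Fact p.Prime]

theorem PadicInt.ker_toZMod_eq_span_p :
    RingHom.ker (PadicInt.toZMod (p := p)) = Ideal.span {(p : ℤ_[p])} := by
  rw [PadicInt.ker_toZMod, PadicInt.maximalIdeal_eq_span_p]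

theorem constantCoeff_map_toZMod_eq_zero {f : ℤ_[p]⟦X⟧}
    (hf : constantCoeff f ∈ Ideal.span {(p : ℤ_[p])}) :
    constantCoeff (map PadicInt.toZMod f) = 0 := by
  rwa [← coeff_zero_eq_constantCoeff_apply, coeff_map, coeff_zero_eq_constantCoeff_apply,
    ← RingHom.mem_ker, PadicInt.ker_toZMod_eq_span_p]

noncomputable def reduceEval (f : ℤ_[p]⟦X⟧) (hf : constantCoeff f ∈ Ideal.span {(p : ℤ_[p])}) :
    Lambda p →+* (ZMod p)⟦X⟧ :=
  (evalAt _ (constantCoeff_map_toZMod_eq_zero hf)).comp (map (map PadicInt.toZMod))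

variable {f : ℤ_[p]⟦X⟧} (hf : constantCoeff f ∈ Ideal.span {(p : ℤ_[p])})

theorem coeff_reduceEval (F : Lambda p) (n : ℕ) :
    coeff n (reduceEval f hf F) = ∑ i ∈ Finset.range (n + 1),
      coeff n (map PadicInt.toZMod (coeff i F) * map PadicInt.toZMod f ^ i) := by
  simp only [reduceEval, RingHom.comp_apply, coeff_evalAt, coeff_map]

theorem reduceEval_C (h : ℤ_[p]⟦X⟧) : reduceEval f hf (C h) = map PadicInt.toZMod h := by
  rw [reduceEval, RingHom.comp_apply, map_C, evalAt_C]

theorem reduceEval_Tvar : reduceEval f hf (Tvar p) = X := by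
  rw [Tvar, reduceEval_C, map_X]

theorem reduceEval_onePlusSPow (α : ℤ_[p]) :
    reduceEval f hf (onePlusSPow p α) = onePlusPow p (map PadicInt.toZMod f) α := by
  ext n
  simp only [coeff_reduceEval, onePlusPow, onePlusSPow, coeff_mk, map_C, coeff_C_mul]

theorem map_map_toZMod_surjective :
    Function.Surjective (map (map (PadicInt.toZMod (p := p)))) :=
  map_surjective _ <| map_surjective _ <| ZMod.ringHom_surjective _

theorem reduceEval_surjective : Function.Surjective (reduceEval f hf) :=
  (evalAt_surjective (constantCoeff_map_toZMod_eq_zero hf)).comp map_map_toZMod_surjective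

theorem ker_reduceEval :
    RingHom.ker (reduceEval f hf) = Ideal.span {X - C f, (p : Lambda p)} := by
  have hker : RingHom.ker (map (map (PadicInt.toZMod (p := p)))) =
      Ideal.span {(p : Lambda p)} := by
    rw [ker_map_of_ker_eq_span_singleton (ker_map_of_ker_eq_span_singleton
      PadicInt.ker_toZMod_eq_span_p), map_natCast, map_natCast]
  have hlift : Ideal.span {X - C (map PadicInt.toZMod f)} =
      Ideal.map (map (map PadicInt.toZMod)) (Ideal.span {X - C f}) := by
    rw [Ideal.map_span, Set.image_singleton, map_sub, map_X, map_C]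
  rw [reduceEval, ← RingHom.comap_ker, ker_evalAt, hlift,
    Ideal.comap_map_of_surjective _ map_map_toZMod_surjective, ← RingHom.ker_eq_comap_bot, hker,
    Ideal.span_insert]

end Reduction

/-- reduction step in the key lemma: if the constant coefficient of
`f ∈ ℤ_p[[T]]` lies in `pℤ_p`, then the ring homomorphism `ℤ_p[[S,T]] → 𝔽_p[[T]]`, obtained by
reducing coefficients mod `p` and substituting `S ↦ f̄(T)`, `T ↦ T` (here `f̄ ∈ 𝔽_p[[T]]` is the
coefficientwise reduction of `f` mod `p`, and an element `F = Σ_i a_i(T)·S^i` of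
`ℤ_p[[S,T]] = (ℤ_p[[T]])[[S]]` is sent to `Σ_i ā_i(T)·f̄(T)^i`, whose `n`-th coefficient is the
finite sum over `i ≤ n` since `f̄` has zero constant coefficient), induces a ring isomorphism
`ℤ_p[[S,T]]/I_α(f) ≅ 𝔽_p[[T]]/((1+f̄)^α(1+T) − 1)`. -/
theorem quotient_Ialpha_iso (p : ℕ) [Fact p.Prime] (f : PowerSeries ℤ_[p])
    (hf : PowerSeries.constantCoeff (R := ℤ_[p]) f ∈ Ideal.span {(p : ℤ_[p])}) (α : ℤ_[p]) :
    ∃ φ : Lambda p →+* PowerSeries (ZMod p),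
      (∀ F : Lambda p, φ F = PowerSeries.mk fun n => ∑ i ∈ Finset.range (n + 1),
        PowerSeries.coeff (R := ZMod p) n
          (PowerSeries.map PadicInt.toZMod (PowerSeries.coeff (R := PowerSeries ℤ_[p]) i F) *
            PowerSeries.map PadicInt.toZMod f ^ i)) ∧
      ∃ e : (Lambda p ⧸ Ialpha p f α) ≃+*
          (PowerSeries (ZMod p) ⧸
            Ideal.span {onePlusPow p (PowerSeries.map PadicInt.toZMod f) α *
              (1 + PowerSeries.X) - 1}),
        ∀ F : Lambda p,
          e (Ideal.Quotient.mk (Ialpha p f α) F) = Ideal.Quotient.mk _ (φ F) := by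
  refine ⟨reduceEval f hf, fun F => by ext n; rw [coeff_reduceEval, coeff_mk], ?_⟩
  refine RingHom.exists_quotientEquiv_span_singleton (reduceEval_surjective hf)
    (w := onePlusSPow p α * (1 + Tvar p) - 1) ?_ ?_
  · rw [map_sub, map_mul, map_add, map_one, reduceEval_onePlusSPow, reduceEval_Tvar]
  · rw [ker_reduceEval, Ialpha, Ideal.span_insert]
end

section
/- Let p be a prime, f(T) ∈ ℤ_p[[T]] a power series all of whose coefficients lie in pℤ_p (i.e. f ∈ p·ℤ_p[[T]]), and α ∈ ℤ_p. Then dim_{𝔽_p} ℤ_p[[S,T]]/I_α(f) = 1. (The case μ(f) > 0 in the proof of the key lemma.) -/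
open PowerSeries

/-! Since `f ≡ 0 mod p`, the ideal `I_α(f)` contains `S`; since `(1+S)^α ≡ 1 mod S`, it then
contains `T`. Hence `I_α(f) = (S, T, p)`, which is the kernel of the surjection
`ℤ_p[[S,T]] → 𝔽_p`, `F ↦ F(0,0) mod p`. -/

theorem RingHom.ker_comp_eq_sup_map_of_rightInverse {A B C : Type*} [Ring A] [Ring B] [Ring C]
    {f : A →+* B} {σ : B →+* A} (hσ : Function.RightInverse σ f) (g : B →+* C) :
    RingHom.ker (g.comp f) = RingHom.ker f ⊔ (RingHom.ker g).map σ := by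
  refine le_antisymm (fun a ha => ?_) (sup_le ?_ ?_)
  · have hfa : f a ∈ RingHom.ker g := ha
    rw [← sub_add_cancel a (σ (f a))]
    refine Submodule.add_mem_sup ?_ (Ideal.mem_map_of_mem σ hfa)
    simp [RingHom.mem_ker, hσ (f a)]
  · exact fun a ha => by simp [RingHom.mem_ker, (RingHom.mem_ker).mp ha]
  · rw [Ideal.map_le_iff_le_comap]
    exact fun b hb => by simp [RingHom.mem_ker, hσ b, (RingHom.mem_ker).mp hb]

theorem PowerSeries.ker_constantCoeff {R : Type*} [CommSemiring R] :
    RingHom.ker (constantCoeff (R := R)) = Ideal.span {X} := by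
  ext φ
  rw [RingHom.mem_ker, Ideal.mem_span_singleton, X_dvd_iff]

theorem fpDim_eq_rank (p : ℕ) {R : Type} [CommRing R] {I : Ideal R} (h : (p : R) ∈ I)
    [Module (ZMod p) (R ⧸ I)] : fpDim p I h = Module.rank (ZMod p) (R ⧸ I) := by
  unfold fpDim
  congr
  exact Subsingleton.elim _ _

theorem fpDim_eq_one_of_ringEquiv (p : ℕ) [Fact (1 < p)] {R : Type} [CommRing R]
    {I : Ideal R} (h : (p : R) ∈ I) (e : (R ⧸ I) ≃+* ZMod p) : fpDim p I h = 1 := by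
  let _ : Module (ZMod p) (R ⧸ I) := Module.compHom (R ⧸ I) e.symm.toRingHom
  let e' : (R ⧸ I) ≃ₗ[ZMod p] ZMod p := { e with map_smul' := ZMod.map_smul e.toAddMonoidHom }
  rw [fpDim_eq_rank p h, e'.rank_eq, Module.rank_self]

noncomputable def residueAtZero (p : ℕ) [Fact p.Prime] : Lambda p →+* ZMod p :=
  ((PadicInt.toZMod : ℤ_[p] →+* ZMod p).comp (constantCoeff (R := ℤ_[p]))).comp
    (constantCoeff (R := PowerSeries ℤ_[p]))

theorem ker_residueAtZero (p : ℕ) [Fact p.Prime] : RingHom.ker (residueAtZero p) =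
    Ideal.span {X, Tvar p, (p : Lambda p)} := by
  rw [residueAtZero, RingHom.ker_comp_eq_sup_map_of_rightInverse (σ := C) (constantCoeff_C ·),
    RingHom.ker_comp_eq_sup_map_of_rightInverse (σ := C) (constantCoeff_C ·),
    PadicInt.ker_toZMod, PadicInt.maximalIdeal_eq_span_p]
  simp only [ker_constantCoeff, Ideal.map_sup, Ideal.map_span, Set.image_singleton, map_natCast]
  rw [Ideal.span_insert, Ideal.span_insert, Tvar]

theorem constantCoeff_onePlusSPow (p : ℕ) [Fact p.Prime] (α : ℤ_[p]) :
    constantCoeff (onePlusSPow p α) = 1 := by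
  simp [onePlusSPow]

theorem X_dvd_onePlusSPow_sub_one (p : ℕ) [Fact p.Prime] (α : ℤ_[p]) :
    (X : Lambda p) ∣ onePlusSPow p α - 1 := by
  simp [X_dvd_iff, constantCoeff_onePlusSPow]

theorem Ialpha_le_ker_residueAtZero (p : ℕ) [Fact p.Prime] {f : PowerSeries ℤ_[p]}
    (hf : PadicInt.toZMod (constantCoeff f) = 0) (α : ℤ_[p]) :
    Ialpha p f α ≤ RingHom.ker (residueAtZero p) := by
  simp [Ialpha, Ideal.span_le, Set.insert_subset_iff, hf, residueAtZero, Tvar,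
    constantCoeff_onePlusSPow]

theorem X_mem_Ialpha (p : ℕ) [Fact p.Prime] {f : PowerSeries ℤ_[p]}
    (hf : f ∈ Ideal.span {(p : PowerSeries ℤ_[p])}) (α : ℤ_[p]) :
    (X : Lambda p) ∈ Ialpha p f α := by
  obtain ⟨g, hg⟩ := Ideal.mem_span_singleton.mp hf
  have hCf : C f = (p : Lambda p) * C g := by rw [hg, map_mul, map_natCast]
  have hSf : X - C f ∈ Ialpha p f α := Ideal.subset_span (by simp)
  simpa [hCf] using
    (Ialpha p f α).add_mem hSf ((Ialpha p f α).mul_mem_right (C g) (p_mem_Ialpha p f α))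

theorem Tvar_mem_Ialpha_of_X_mem (p : ℕ) [Fact p.Prime] {f : PowerSeries ℤ_[p]} {α : ℤ_[p]}
    (hX : (X : Lambda p) ∈ Ialpha p f α) : Tvar p ∈ Ialpha p f α := by
  obtain ⟨g, hg⟩ := X_dvd_onePlusSPow_sub_one p α
  have hT : Tvar p = (onePlusSPow p α * (1 + Tvar p) - 1) - X * (g * (1 + Tvar p)) := by
    rw [← mul_assoc, ← hg]; ring
  rw [hT]
  exact (Ialpha p f α).sub_mem (Ideal.subset_span (by simp)) ((Ialpha p f α).mul_mem_right _ hX)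

theorem Ialpha_eq_ker_residueAtZero (p : ℕ) [Fact p.Prime] {f : PowerSeries ℤ_[p]}
    (hf : f ∈ Ideal.span {(p : PowerSeries ℤ_[p])}) (α : ℤ_[p]) :
    Ialpha p f α = RingHom.ker (residueAtZero p) := by
  have hf₀ : PadicInt.toZMod (constantCoeff f) = 0 := by
    obtain ⟨g, rfl⟩ := Ideal.mem_span_singleton.mp hf
    simp
  refine le_antisymm (Ialpha_le_ker_residueAtZero p hf₀ α) ?_
  have hX := X_mem_Ialpha p hf α
  rw [ker_residueAtZero, Ideal.span_le]
  simp [Set.insert_subset_iff, hX, Tvar_mem_Ialpha_of_X_mem p hX, p_mem_Ialpha]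

/-- the case `μ(f) > 0`: if all coefficients of `f` lie in `pℤ_p`, i.e.
`f ∈ p·ℤ_p[[T]]`, then `dim_{𝔽_p} ℤ_p[[S,T]]/I_α(f) = 1`. -/
theorem fpDim_Ialpha_eq_one_of_mem_span_p (p : ℕ) [Fact p.Prime]
    (f : PowerSeries ℤ_[p]) (hf : f ∈ Ideal.span {(p : PowerSeries ℤ_[p])}) (α : ℤ_[p]) :
    fpDim p (Ialpha p f α) (p_mem_Ialpha p f α) = 1 :=
  fpDim_eq_one_of_ringEquiv p _ <|
    (Ideal.quotEquivOfEq (Ialpha_eq_ker_residueAtZero p hf α)).trans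
      (RingHom.quotientKerEquivOfSurjective (ZMod.ringHom_surjective (residueAtZero p)))
end

section
/- Let p be an odd prime, g ∈ 𝔽_p[[T]] a power series with zero constant coefficient, and α ∈ ℤ_p. Then at least one of the two power series (1+g)^α(1+T) − 1 and (1+g)^{−α}(1+T) − 1 in 𝔽_p[[T]] has order exactly 1 (i.e. zero constant coefficient and nonzero coefficient of T). (The characteristic-p heart of the dichotomy in the key lemma; it fails for p = 2.) -/
/-!
The constant coefficient of `(1+g)^{±α}(1+T) − 1` is `0` and its coefficient of `T` is
`1 ± c(α,1)·g₁`, where `g₁` is the coefficient of `T` in `g`. These two numbers sum to `2`,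
which is nonzero in `𝔽_p` for odd `p`, so one of them is nonzero.
-/

open PowerSeries

section Coefficients

variable {p : ℕ} [Fact p.Prime] (g : (ZMod p)⟦X⟧) (α : ℤ_[p])

lemma constantCoeff_onePlusPow : constantCoeff (onePlusPow p g α) = 1 := by
  simp [onePlusPow]

lemma coeff_one_onePlusPow :
    coeff 1 (onePlusPow p g α) = PadicInt.toZMod α * coeff 1 g := by
  simp [onePlusPow, Finset.sum_range_succ]

end Coefficients

lemma order_mul_one_add_X_sub_one_eq_one {R : Type*} [Ring R] {f : R⟦X⟧}
    (h0 : constantCoeff f = 1) (h1 : coeff 1 f + 1 ≠ 0) : (f * (1 + X) - 1).order = 1 := by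
  refine (order_eq_nat (n := 1)).mpr ⟨?_, fun i hi => ?_⟩
  · rwa [map_sub, mul_add, mul_one, map_add, coeff_succ_mul_X, coeff_zero_eq_constantCoeff_apply,
      h0, coeff_one, if_neg one_ne_zero, sub_zero]
  · obtain rfl : i = 0 := Nat.lt_one_iff.mp hi
    simp [h0]

lemma add_one_ne_zero_or_neg_add_one_ne_zero {R : Type*} [CommRing R] (h2 : (2 : R) ≠ 0) (a : R) :
    a + 1 ≠ 0 ∨ -a + 1 ≠ 0 := by
  by_contra! h
  exact h2 (by linear_combination h.1 + h.2)

theorem order_eq_one_or_general (p : ℕ) [Fact p.Prime] (hp : Odd p) (g : PowerSeries (ZMod p))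
    (α : ℤ_[p]) :
    (onePlusPow p g α * (1 + PowerSeries.X) - 1).order = 1 ∨
    (onePlusPow p g (-α) * (1 + PowerSeries.X) - 1).order = 1 := by
  have h2 : (2 : ZMod p) ≠ 0 :=
    Ring.two_ne_zero (by rw [ZMod.ringChar_zmod_n]; exact hp.ne_two_of_dvd_nat dvd_rfl)
  rcases add_one_ne_zero_or_neg_add_one_ne_zero h2 (PadicInt.toZMod α * coeff 1 g) with h | h
  · left
    exact order_mul_one_add_X_sub_one_eq_one (constantCoeff_onePlusPow g α)
      (by rwa [coeff_one_onePlusPow])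
  · right
    exact order_mul_one_add_X_sub_one_eq_one (constantCoeff_onePlusPow g (-α))
      (by rwa [coeff_one_onePlusPow, map_neg, neg_mul])

/-- the characteristic-`p` heart of the dichotomy: for an odd prime `p`,
`g ∈ 𝔽_p[[T]]` with zero constant coefficient and `α ∈ ℤ_p`, at least one of the power series
`(1+g)^α(1+T) − 1` and `(1+g)^{−α}(1+T) − 1` has order exactly `1`. -/
theorem order_eq_one_or (p : ℕ) [Fact p.Prime] (hp : Odd p) (g : PowerSeries (ZMod p))
    (hg : PowerSeries.constantCoeff (R := ZMod p) g = 0) (α : ℤ_[p]) :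
    (onePlusPow p g α * (1 + PowerSeries.X) - 1).order = 1 ∨
    (onePlusPow p g (-α) * (1 + PowerSeries.X) - 1).order = 1 :=
  order_eq_one_or_general p hp g α
end

section
/- Let p be a prime and regard ℤ_p[[T]] as a subring of Λ := ℤ_p[[S,T]] in the natural way. Let X be a Λ-module which is cyclic over ℤ_p[[T]], i.e. X = ℤ_p[[T]]·x for some x ∈ X. Then there exists a power series f(T) ∈ ℤ_p[[T]] such that (S − f(T))·X = 0, i.e. S − f(T) lies in the annihilator ideal Ann_Λ(X). (The annihilator construction, following Bloom and Fujii, used in the proof of the CM-field theorem.) -/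
open PowerSeries

/- Write `a • x = φ b • x`; since `A` is commutative, `a - φ b` then kills every `φ c • x`. -/
theorem exists_sub_smul_eq_zero_of_forall_eq_smul {A B M : Type*} [CommRing A] [AddCommGroup M]
    [Module A M] (φ : B → A) (x : M) (hx : ∀ y : M, ∃ c : B, y = φ c • x) (a : A) :
    ∃ b : B, ∀ y : M, (a - φ b) • y = 0 := by
  obtain ⟨b, hb⟩ := hx (a • x)
  refine ⟨b, fun y => ?_⟩
  obtain ⟨c, rfl⟩ := hx y
  rw [smul_smul, mul_comm, ← smul_smul, sub_smul, hb, sub_self, smul_zero]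

/-- the annihilator construction of Bloom and Fujii: if `X` is a module over
`Λ = ℤ_p[[S,T]]` which is cyclic over the subring `ℤ_p[[T]]`, say `X = ℤ_p[[T]]·x`, then there is
a power series `f(T) ∈ ℤ_p[[T]]` with `(S − f(T))·X = 0`, i.e. `S − f(T) ∈ Ann_Λ(X)`. -/
theorem exists_S_sub_f_annihilates (p : ℕ) [Fact p.Prime] (X : Type) [AddCommGroup X]
    [Module (Lambda p) X] (x : X)
    (hx : ∀ y : X, ∃ c : PowerSeries ℤ_[p],
      y = (PowerSeries.C (R := PowerSeries ℤ_[p]) c : Lambda p) • x) :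
    ∃ f : PowerSeries ℤ_[p],
      ∀ y : X, ((PowerSeries.X : Lambda p) - PowerSeries.C (R := PowerSeries ℤ_[p]) f) • y = 0 :=
  exists_sub_smul_eq_zero_of_forall_eq_smul _ x hx _
end
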